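/- arXiv:2012.10406 — 2 statements merged into one kernel-verified Lean document; each statement's English description precedes it below -/
import Mathlib

section
/- Let (b, B, m, μ) be an admissible parameter set. For u ∈ K define DF(u) : H → ℝ by DF(u)v = ⟨b,v⟩ + ∫ (⟨ξ,v⟩ e^{−⟨ξ,u⟩} − ⟨χ(ξ),v⟩) m(dξ) and D²F(u)(v,w) = −∫ ⟨ξ,v⟩ ⟨ξ,w⟩ e^{−⟨ξ,u⟩} m(dξ) (all integrals being finite). Then for all u, v, w ∈ K the one-sided derivatives of F exist and satisfy D₊F(u)(v) = DF(u)v and D₊²F(u)(v,w) = D²F(u)(v,w). -/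
/-!
On the cone every `⟪ξ, x⟫` is nonnegative, so `t ↦ e^{-⟪ξ, u + t • v⟫}` is bounded by `1` for
`t ≥ 0`, and `|⟪ξ, v⟫| ≤ |⟪χ(ξ), v⟫| + ‖ξ‖² ‖v‖` is `m`-integrable by the two integrability
conditions on `m`. Hence the `t`-derivatives of the integrands of `F` and `DF` are dominated
uniformly in `t ≥ 0`; the mean value theorem transfers this bound to the difference quotients, and
dominated convergence passes the one-sided limit through the integral.
-/

open MeasureTheory Filter
open scoped RealInnerProductSpace Topology ENNReal

noncomputable section

def IsSelfDualCone {H : Type*} [NormedAddCommGroup H] [InnerProductSpace ℝ H]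
    (K : Set H) : Prop :=
  K = {x : H | ∀ y ∈ K, 0 ≤ ⟪x, y⟫}

def trunc {H : Type*} [NormedAddCommGroup H] [InnerProductSpace ℝ H] (ξ : H) : H :=
  if ‖ξ‖ ≤ 1 then ξ else 0

structure AdmissibleParams (H : Type*) [NormedAddCommGroup H] [InnerProductSpace ℝ H]
    [CompleteSpace H] [MeasurableSpace H] [BorelSpace H] (K : Set H) where
  b : H
  B : H →L[ℝ] H
  m : Measure H
  ν : H → Measure H
  muVec : Set H → H
  m_support : m ((K \ {0})ᶜ) = 0
  m_sq : IntegrableOn (fun ξ : H => ‖ξ‖ ^ 2) (K \ {0}) m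
  m_chi : ∀ h : H, IntegrableOn (fun ξ : H => |⟪trunc ξ, h⟫|) (K \ {0}) m
  m_Im : ∃ Im : H, ∀ h : H, ⟪Im, h⟫ = ∫ ξ in K \ {0}, ⟪trunc ξ, h⟫ ∂m
  b_drift : ∀ v ∈ K, 0 ≤ ⟪b, v⟫ - ∫ ξ in K \ {0}, ⟪trunc ξ, v⟫ ∂m
  ν_finite : ∀ x ∈ K, IsFiniteMeasure (ν x)
  ν_support : ∀ x ∈ K, ν x ((K \ {0})ᶜ) = 0
  ν_add : ∀ x ∈ K, ∀ y ∈ K, ν (x + y) = ν x + ν y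
  ν_smul : ∀ x ∈ K, ∀ c : ℝ, 0 ≤ c → ν (c • x) = ENNReal.ofReal c • ν x
  ν_int : ∀ u ∈ K, ∀ x ∈ K, ⟪u, x⟫ = 0 →
    IntegrableOn (fun ξ : H => ⟪trunc ξ, u⟫ / ‖ξ‖ ^ 2) (K \ {0}) (ν x)
  B_quasi : ∀ u ∈ K, ∀ x ∈ K, ⟪u, x⟫ = 0 →
    0 ≤ ⟪ContinuousLinearMap.adjoint B u, x⟫
      - ∫ ξ in K \ {0}, ⟪trunc ξ, u⟫ / ‖ξ‖ ^ 2 ∂(ν x)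
  muVec_mem : ∀ S : Set H, MeasurableSet S → muVec S ∈ K
  muVec_spec : ∀ S : Set H, MeasurableSet S → ∀ x ∈ K, ⟪muVec S, x⟫ = (ν x S).toReal

/-- The function `F` associated with an admissible parameter set. -/
def Ffun {H : Type*} [NormedAddCommGroup H] [InnerProductSpace ℝ H] [CompleteSpace H]
    [MeasurableSpace H] [BorelSpace H] {K : Set H} (p : AdmissibleParams H K) (u : H) : ℝ :=
  ⟪p.b, u⟫ - ∫ ξ in K \ {0}, (Real.exp (-⟪ξ, u⟫) - 1 + ⟪trunc ξ, u⟫) ∂p.m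

/-- The first derivative candidate `DF(u)v` of `F`. -/
def DFfun {H : Type*} [NormedAddCommGroup H] [InnerProductSpace ℝ H] [CompleteSpace H]
    [MeasurableSpace H] [BorelSpace H] {K : Set H} (p : AdmissibleParams H K) (u v : H) : ℝ :=
  ⟪p.b, v⟫ + ∫ ξ in K \ {0}, (⟪ξ, v⟫ * Real.exp (-⟪ξ, u⟫) - ⟪trunc ξ, v⟫) ∂p.m

theorem hasDerivWithinAt_integral_Ici_of_dominated {α E : Type*} [MeasurableSpace α]
    {μ : Measure α} [NormedAddCommGroup E] [NormedSpace ℝ E] [CompleteSpace E]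
    {F F' : ℝ → α → E} {bound : α → ℝ}
    (hF_int : ∀ t, 0 ≤ t → Integrable (F t) μ)
    (h_diff : ∀ᵐ a ∂μ, ∀ t, 0 ≤ t → HasDerivWithinAt (F · a) (F' t a) (Set.Ici 0) t)
    (h_bound : ∀ᵐ a ∂μ, ∀ t, 0 ≤ t → ‖F' t a‖ ≤ bound a)
    (bound_integrable : Integrable bound μ) :
    HasDerivWithinAt (fun t => ∫ a, F t a ∂μ) (∫ a, F' 0 a ∂μ) (Set.Ici 0) 0 := by
  refine HasDerivWithinAt.Ici_of_Ioi <|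
    (hasDerivWithinAt_iff_tendsto_slope' Set.self_notMem_Ioi).2 ?_
  have h_slope : ∀ t ∈ Set.Ioi (0 : ℝ),
      ∫ a, slope (F · a) 0 t ∂μ = slope (fun t => ∫ a, F t a ∂μ) 0 t := by
    intro t ht
    simp only [slope_def_module, integral_smul,
      integral_sub (hF_int t ht.le) (hF_int 0 le_rfl)]
  refine Tendsto.congr' (eventuallyEq_nhdsWithin_of_eqOn h_slope) ?_
  refine tendsto_integral_filter_of_dominated_convergence bound ?_ ?_ bound_integrable ?_
  · filter_upwards [self_mem_nhdsWithin] with t (ht : 0 < t)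
    exact (((hF_int t ht.le).sub (hF_int 0 le_rfl)).smul (t - 0)⁻¹).aestronglyMeasurable
  · filter_upwards [self_mem_nhdsWithin] with t (ht : 0 < t)
    filter_upwards [h_diff, h_bound] with a ha_diff ha_bound
    have h_mvt : ‖F t a - F 0 a‖ ≤ bound a * (t - 0) :=
      norm_image_sub_le_of_norm_deriv_le_segment'
        (fun s hs => (ha_diff s hs.1).mono Set.Icc_subset_Ici_self)
        (fun s hs => ha_bound s hs.1) t ⟨ht.le, le_rfl⟩
    rw [slope_def_module, norm_smul, norm_inv, sub_zero, Real.norm_of_nonneg ht.le]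
    rw [sub_zero, mul_comm] at h_mvt
    exact (inv_mul_le_iff₀ ht).2 h_mvt
  · filter_upwards [h_diff] with a ha
    exact (hasDerivWithinAt_iff_tendsto_slope' Set.self_notMem_Ioi).1 (ha 0 le_rfl).Ioi_of_Ici

theorem HasDerivWithinAt.tendsto_div_sub_nhdsGT_zero {f : ℝ → ℝ} {f' : ℝ}
    (h : HasDerivWithinAt f f' (Set.Ici 0) 0) :
    Tendsto (fun t => (f t - f 0) / t) (𝓝[>] 0) (𝓝 f') := by
  refine ((hasDerivWithinAt_iff_tendsto_slope' Set.self_notMem_Ioi).1 h.Ioi_of_Ici).congr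
    fun t => ?_
  rw [slope_def_field, sub_zero]

namespace IsSelfDualCone

variable {H : Type*} [NormedAddCommGroup H] [InnerProductSpace ℝ H] {K : Set H}

theorem inner_nonneg (hK : IsSelfDualCone K) {x y : H} (hx : x ∈ K) (hy : y ∈ K) :
    0 ≤ ⟪x, y⟫ := by
  rw [hK] at hx
  exact hx y hy

theorem eq_innerDual [CompleteSpace H] (hK : IsSelfDualCone K) :
    K = ProperCone.innerDual K := by
  conv_lhs => rw [hK]
  ext x
  simp [real_inner_comm]

theorem add_smul_mem [CompleteSpace H] (hK : IsSelfDualCone K) {u v : H} (hu : u ∈ K)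
    (hv : v ∈ K) {t : ℝ} (ht : 0 ≤ t) : u + t • v ∈ K := by
  rw [hK.eq_innerDual] at hu hv ⊢
  exact add_mem hu ((ProperCone.innerDual K).smul_mem hv ht)

theorem ae_restrict_mem [CompleteSpace H] [MeasurableSpace H] [BorelSpace H]
    (hK : IsSelfDualCone K) (μ : Measure H) : ∀ᵐ ξ ∂μ.restrict (K \ {0}), ξ ∈ K := by
  have hK_closed : IsClosed K := hK.eq_innerDual ▸ (ProperCone.innerDual K).isClosed
  filter_upwards [MeasureTheory.ae_restrict_mem
    (hK_closed.measurableSet.diff (measurableSet_singleton 0))] with ξ hξ using hξ.1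

end IsSelfDualCone

section Pointwise

variable {H : Type*} [NormedAddCommGroup H] [InnerProductSpace ℝ H]

@[fun_prop]
theorem measurable_trunc [MeasurableSpace H] [BorelSpace H] : Measurable (trunc : H → H) :=
  Measurable.ite (measurableSet_le measurable_norm measurable_const) measurable_id
    measurable_const

theorem abs_inner_le_abs_inner_trunc_add (ξ v : H) :
    |⟪ξ, v⟫| ≤ |⟪trunc ξ, v⟫| + ‖ξ‖ ^ 2 * ‖v‖ := by
  unfold trunc
  split_ifs with hξ
  · exact le_add_of_nonneg_right (by positivity)
  · calc |⟪ξ, v⟫| ≤ ‖ξ‖ * ‖v‖ := abs_real_inner_le_norm ξ v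
      _ ≤ ‖ξ‖ ^ 2 * ‖v‖ := by gcongr; nlinarith
      _ = |⟪(0 : H), v⟫| + ‖ξ‖ ^ 2 * ‖v‖ := by simp

theorem abs_exp_neg_inner_sub_one_add_inner_trunc_le {ξ x : H} (hξx : 0 ≤ ⟪ξ, x⟫) :
    |Real.exp (-⟪ξ, x⟫) - 1 + ⟪trunc ξ, x⟫| ≤ |⟪trunc ξ, x⟫| + ‖ξ‖ ^ 2 := by
  have h_le_one : Real.exp (-⟪ξ, x⟫) ≤ 1 := Real.exp_le_one_iff.2 (neg_nonpos.2 hξx)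
  have h_tangent : -⟪ξ, x⟫ + 1 ≤ Real.exp (-⟪ξ, x⟫) := Real.add_one_le_exp _
  have h_pos : 0 < Real.exp (-⟪ξ, x⟫) := Real.exp_pos _
  unfold trunc
  split_ifs with hξ
  · rw [abs_of_nonneg hξx, abs_le]
    constructor <;> nlinarith [norm_nonneg ξ]
  · have : 1 ≤ ‖ξ‖ ^ 2 := by nlinarith
    rw [inner_zero_left, abs_zero, add_zero, zero_add, abs_le]
    constructor <;> linarith

theorem abs_inner_mul_exp_neg_sub_inner_trunc_le {ξ x : H} (hξx : 0 ≤ ⟪ξ, x⟫) (v : H) :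
    |⟪ξ, v⟫ * Real.exp (-⟪ξ, x⟫) - ⟪trunc ξ, v⟫| ≤ 2 * |⟪trunc ξ, v⟫| + ‖ξ‖ ^ 2 * ‖v‖ := by
  have h_exp : |Real.exp (-⟪ξ, x⟫)| ≤ 1 := by
    rw [Real.abs_exp]; exact Real.exp_le_one_iff.2 (neg_nonpos.2 hξx)
  calc |⟪ξ, v⟫ * Real.exp (-⟪ξ, x⟫) - ⟪trunc ξ, v⟫|
      ≤ |⟪ξ, v⟫| * |Real.exp (-⟪ξ, x⟫)| + |⟪trunc ξ, v⟫| := by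
        rw [← abs_mul]; exact abs_sub _ _
    _ ≤ |⟪ξ, v⟫| + |⟪trunc ξ, v⟫| := by
        gcongr; exact mul_le_of_le_one_right (abs_nonneg _) h_exp
    _ ≤ 2 * |⟪trunc ξ, v⟫| + ‖ξ‖ ^ 2 * ‖v‖ := by
        linarith [abs_inner_le_abs_inner_trunc_add ξ v]

theorem abs_inner_mul_inner_mul_exp_neg_le {ξ x : H} (hξx : 0 ≤ ⟪ξ, x⟫) (v w : H) :
    |⟪ξ, v⟫ * ⟪ξ, w⟫ * Real.exp (-⟪ξ, x⟫)| ≤ ‖ξ‖ ^ 2 * (‖v‖ * ‖w‖) := by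
  rw [abs_mul, abs_mul, Real.abs_exp]
  calc |⟪ξ, v⟫| * |⟪ξ, w⟫| * Real.exp (-⟪ξ, x⟫) ≤ (‖ξ‖ * ‖v‖) * (‖ξ‖ * ‖w‖) * 1 := by
        gcongr
        · exact abs_real_inner_le_norm ξ v
        · exact abs_real_inner_le_norm ξ w
        · exact Real.exp_le_one_iff.2 (neg_nonpos.2 hξx)
    _ = ‖ξ‖ ^ 2 * (‖v‖ * ‖w‖) := by ring

theorem hasDerivAt_inner_add_smul (y u v : H) (t : ℝ) :
    HasDerivAt (fun s : ℝ => ⟪y, u + s • v⟫) ⟪y, v⟫ t := by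
  simp_rw [inner_add_right, real_inner_smul_right]
  exact (hasDerivAt_mul_const _).const_add _

theorem hasDerivAt_exp_neg_inner_add_smul (ξ u v : H) (t : ℝ) :
    HasDerivAt (fun s : ℝ => Real.exp (-⟪ξ, u + s • v⟫))
      (-⟪ξ, v⟫ * Real.exp (-⟪ξ, u + t • v⟫)) t := by
  simpa [mul_comm] using (hasDerivAt_inner_add_smul ξ u v t).neg.exp

end Pointwise

namespace AdmissibleParams

variable {H : Type*} [NormedAddCommGroup H] [InnerProductSpace ℝ H] [CompleteSpace H]
  [MeasurableSpace H] [BorelSpace H] {K : Set H} {u v w x : H}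

theorem integrableOn_exp_neg_inner_sub_one_add_inner_trunc (hK : IsSelfDualCone K)
    (p : AdmissibleParams H K) (hx : x ∈ K) :
    IntegrableOn (fun ξ => Real.exp (-⟪ξ, x⟫) - 1 + ⟪trunc ξ, x⟫) (K \ {0}) p.m := by
  refine Integrable.mono' ((p.m_chi x).add p.m_sq)
    (Measurable.aestronglyMeasurable (by fun_prop)) ?_
  filter_upwards [hK.ae_restrict_mem p.m] with ξ hξ
  exact abs_exp_neg_inner_sub_one_add_inner_trunc_le (hK.inner_nonneg hξ hx)

theorem integrableOn_inner_mul_exp_neg_sub_inner_trunc (hK : IsSelfDualCone K)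
    (p : AdmissibleParams H K) (hx : x ∈ K) (v : H) :
    IntegrableOn (fun ξ => ⟪ξ, v⟫ * Real.exp (-⟪ξ, x⟫) - ⟪trunc ξ, v⟫) (K \ {0}) p.m := by
  refine Integrable.mono' (((p.m_chi v).const_mul 2).add (p.m_sq.mul_const ‖v‖))
    (Measurable.aestronglyMeasurable (by fun_prop)) ?_
  filter_upwards [hK.ae_restrict_mem p.m] with ξ hξ
  exact abs_inner_mul_exp_neg_sub_inner_trunc_le (hK.inner_nonneg hξ hx) v

theorem integrableOn_inner_mul_inner_mul_exp_neg (hK : IsSelfDualCone K)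
    (p : AdmissibleParams H K) (hx : x ∈ K) (v w : H) :
    IntegrableOn (fun ξ => ⟪ξ, v⟫ * ⟪ξ, w⟫ * Real.exp (-⟪ξ, x⟫)) (K \ {0}) p.m := by
  refine Integrable.mono' (p.m_sq.mul_const (‖v‖ * ‖w‖))
    (Measurable.aestronglyMeasurable (by fun_prop)) ?_
  filter_upwards [hK.ae_restrict_mem p.m] with ξ hξ
  exact abs_inner_mul_inner_mul_exp_neg_le (hK.inner_nonneg hξ hx) v w

theorem hasDerivWithinAt_Ffun (hK : IsSelfDualCone K) (p : AdmissibleParams H K)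
    (hu : u ∈ K) (hv : v ∈ K) :
    HasDerivWithinAt (fun t : ℝ => Ffun p (u + t • v)) (DFfun p u v) (Set.Ici 0) 0 := by
  have h_integral := hasDerivWithinAt_integral_Ici_of_dominated
    (μ := p.m.restrict (K \ {0}))
    (F := fun t ξ => Real.exp (-⟪ξ, u + t • v⟫) - 1 + ⟪trunc ξ, u + t • v⟫)
    (F' := fun t ξ => -(⟪ξ, v⟫ * Real.exp (-⟪ξ, u + t • v⟫) - ⟪trunc ξ, v⟫))
    (fun t ht => p.integrableOn_exp_neg_inner_sub_one_add_inner_trunc hK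
      (hK.add_smul_mem hu hv ht))
    (ae_of_all _ fun ξ t _ => by
      refine ((((hasDerivAt_exp_neg_inner_add_smul ξ u v t).sub_const 1).add
        (hasDerivAt_inner_add_smul (trunc ξ) u v t)).congr_deriv ?_).hasDerivWithinAt
      ring)
    (by
      filter_upwards [hK.ae_restrict_mem p.m] with ξ hξ t ht
      rw [norm_neg, Real.norm_eq_abs]
      exact abs_inner_mul_exp_neg_sub_inner_trunc_le
        (hK.inner_nonneg hξ (hK.add_smul_mem hu hv ht)) v)
    (((p.m_chi v).const_mul 2).add (p.m_sq.mul_const ‖v‖))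
  refine ((hasDerivAt_inner_add_smul p.b u v 0).hasDerivWithinAt.sub h_integral).congr_deriv ?_
  rw [zero_smul, add_zero, integral_neg, sub_neg_eq_add]
  rfl

theorem hasDerivWithinAt_DFfun (hK : IsSelfDualCone K) (p : AdmissibleParams H K)
    (hu : u ∈ K) (hw : w ∈ K) (v : H) :
    HasDerivWithinAt (fun t : ℝ => DFfun p (u + t • w) v)
      (-∫ ξ in K \ {0}, ⟪ξ, v⟫ * ⟪ξ, w⟫ * Real.exp (-⟪ξ, u⟫) ∂p.m) (Set.Ici 0) 0 := by
  have h_integral := hasDerivWithinAt_integral_Ici_of_dominated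
    (μ := p.m.restrict (K \ {0}))
    (F := fun t ξ => ⟪ξ, v⟫ * Real.exp (-⟪ξ, u + t • w⟫) - ⟪trunc ξ, v⟫)
    (F' := fun t ξ => -(⟪ξ, v⟫ * ⟪ξ, w⟫ * Real.exp (-⟪ξ, u + t • w⟫)))
    (fun t ht => p.integrableOn_inner_mul_exp_neg_sub_inner_trunc hK
      (hK.add_smul_mem hu hw ht) v)
    (ae_of_all _ fun ξ t _ => by
      refine ((((hasDerivAt_exp_neg_inner_add_smul ξ u w t).const_mul
        ⟪ξ, v⟫).sub_const _).congr_deriv ?_).hasDerivWithinAt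
      ring)
    (by
      filter_upwards [hK.ae_restrict_mem p.m] with ξ hξ t ht
      rw [norm_neg, Real.norm_eq_abs]
      exact abs_inner_mul_inner_mul_exp_neg_le
        (hK.inner_nonneg hξ (hK.add_smul_mem hu hw ht)) v w)
    (p.m_sq.mul_const (‖v‖ * ‖w‖))
  refine ((hasDerivWithinAt_const 0 _ ⟪p.b, v⟫).add h_integral).congr_deriv ?_
  rw [zero_smul, add_zero, integral_neg, zero_add]

end AdmissibleParams

theorem stmt_11_general {H : Type*} [NormedAddCommGroup H] [InnerProductSpace ℝ H] [CompleteSpace H]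
    [MeasurableSpace H] [BorelSpace H] (K : Set H)
    (hK : IsSelfDualCone K)
    (p : AdmissibleParams H K) :
    ∀ u ∈ K, ∀ v ∈ K, ∀ w ∈ K,
      -- all integrals are finite
      IntegrableOn (fun ξ : H => ⟪ξ, v⟫ * Real.exp (-⟪ξ, u⟫) - ⟪trunc ξ, v⟫) (K \ {0}) p.m ∧
      IntegrableOn (fun ξ : H => ⟪ξ, v⟫ * ⟪ξ, w⟫ * Real.exp (-⟪ξ, u⟫)) (K \ {0}) p.m ∧
      -- first one-sided derivative: `D₊F(u)(v) = DF(u)v`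
      Filter.Tendsto (fun l : ℝ => (Ffun p (u + l • v) - Ffun p u) / l)
        (𝓝[>] 0) (𝓝 (DFfun p u v)) ∧
      -- second one-sided derivative: `D₊²F(u)(v,w) = D²F(u)(v,w)`
      Filter.Tendsto (fun l : ℝ => (DFfun p (u + l • w) v - DFfun p u v) / l)
        (𝓝[>] 0)
        (𝓝 (-∫ ξ in K \ {0}, ⟪ξ, v⟫ * ⟪ξ, w⟫ * Real.exp (-⟪ξ, u⟫) ∂p.m)) := by
  intro u hu v hv w hw
  exact ⟨p.integrableOn_inner_mul_exp_neg_sub_inner_trunc hK hu v,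
    p.integrableOn_inner_mul_inner_mul_exp_neg hK hu v w,
    by simpa using (p.hasDerivWithinAt_Ffun hK hu hv).tendsto_div_sub_nhdsGT_zero,
    by simpa using (p.hasDerivWithinAt_DFfun hK hu hw v).tendsto_div_sub_nhdsGT_zero⟩

/-- The one-sided derivatives of `F` exist on `K` and are given by
`D₊F(u)(v) = DF(u)v` and `D₊²F(u)(v,w) = −∫ ⟨ξ,v⟩⟨ξ,w⟩e^{−⟨ξ,u⟩} m(dξ)`
(all defining integrals being finite). -/
theorem stmt_11 {H : Type*} [NormedAddCommGroup H] [InnerProductSpace ℝ H] [CompleteSpace H]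
    [MeasurableSpace H] [BorelSpace H] (K : Set H)
    (hK : IsSelfDualCone K) (hKgen : ∀ z : H, ∃ x ∈ K, ∃ y ∈ K, z = x - y)
    (p : AdmissibleParams H K) :
    ∀ u ∈ K, ∀ v ∈ K, ∀ w ∈ K,
      -- all integrals are finite
      IntegrableOn (fun ξ : H => ⟪ξ, v⟫ * Real.exp (-⟪ξ, u⟫) - ⟪trunc ξ, v⟫) (K \ {0}) p.m ∧
      IntegrableOn (fun ξ : H => ⟪ξ, v⟫ * ⟪ξ, w⟫ * Real.exp (-⟪ξ, u⟫)) (K \ {0}) p.m ∧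
      -- first one-sided derivative: `D₊F(u)(v) = DF(u)v`
      Filter.Tendsto (fun l : ℝ => (Ffun p (u + l • v) - Ffun p u) / l)
        (𝓝[>] 0) (𝓝 (DFfun p u v)) ∧
      -- second one-sided derivative: `D₊²F(u)(v,w) = D²F(u)(v,w)`
      Filter.Tendsto (fun l : ℝ => (DFfun p (u + l • w) v - DFfun p u v) / l)
        (𝓝[>] 0)
        (𝓝 (-∫ ξ in K \ {0}, ⟪ξ, v⟫ * ⟪ξ, w⟫ * Real.exp (-⟪ξ, u⟫) ∂p.m)) :=
  stmt_11_general K hK p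
end
end

section
/- Let H be a real Hilbert space, K ⊆ H a self-dual cone, B̃ a bounded linear operator on H such that the map x ↦ B̃x is quasi-monotone with respect to K, and b̃ ∈ K. Then for every x ∈ K and every t ≥ 0, the mild solution of the affine ODE dx_t = (b̃ + B̃ x_t) dt, x₀ = x, namely x_t = e^{tB̃} x + ∫₀ᵗ e^{(t−s)B̃} b̃ ds, satisfies x_t ∈ K. -/
open scoped RealInnerProductSpace

/-!
For small `ε > 0` the resolvent `(1 - εB)⁻¹` maps `K` into `K`: write `z = p - n` with `p, n ∈ K`
orthogonal (metric projection onto `K` plus self-duality); if `z - εBz ∈ K`, pairing it with `n`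
and using quasi-monotonicity for `⟪Bp, n⟫ ≥ 0` gives `‖n‖² (1 - ‖εB‖) ≤ 0`, so `z = p ∈ K`.
The Yosida approximants `(1 - εB)⁻¹ B = ε⁻¹ ((1 - εB)⁻¹ - 1)` tend to `B`, and
`exp (s ε⁻¹ ((1 - εB)⁻¹ - 1)) = e^{-s/ε} exp (s ε⁻¹ (1 - εB)⁻¹)` preserves `K` because the
exponential series of a `K`-preserving operator has nonnegative coefficients. As `K` is closed,
`exp (sB)` preserves `K`; finally, integrals of `K`-valued functions stay in the closed convex
cone `K`.
-/

open Filter Topology NormedSpace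
open scoped Nat

namespace ProperCone

variable {E : Type*} [NormedAddCommGroup E] [NormedSpace ℝ E] [CompleteSpace E]

-- Mathlib proves continuity and additivity of `exp` only in `ℚ`-algebras.
noncomputable local instance : NormedAlgebra ℚ (E →L[ℝ] E) := .restrictScalars ℚ ℝ _

theorem mapsTo_exp (C : ProperCone ℝ E) {T : E →L[ℝ] E} (hT : Set.MapsTo T C C) :
    Set.MapsTo (exp T : E →L[ℝ] E) C C := fun x hx => by
  have hsum : HasSum (fun n : ℕ => (n !⁻¹ : ℝ) • (T ^ n) x) (exp T x) :=
    (exp_series_hasSum_exp' (𝕂 := ℝ) T).mapL (ContinuousLinearMap.apply ℝ E x)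
  refine C.isClosed.mem_of_tendsto hsum (Eventually.of_forall fun s => ?_)
  refine sum_mem fun n _ => C.smul_mem ?_ (by positivity)
  rw [pow_apply_eq_iterate]
  exact hT.iterate n hx

theorem mapsTo_exp_smul_of_resolvent (C : ProperCone ℝ E) {B : E →L[ℝ] E}
    (hR : ∀ᶠ ε in 𝓝[>] (0 : ℝ), Set.MapsTo (Ring.inverse (1 - ε • B) : E →L[ℝ] E) C C)
    {s : ℝ} (hs : 0 ≤ s) : Set.MapsTo (exp (s • B) : E →L[ℝ] E) C C := fun x hx => by
  have hcont : Continuous fun ε : ℝ => 1 - ε • B := by fun_prop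
  have hunit : ∀ᶠ ε in 𝓝 (0 : ℝ), IsUnit (1 - ε • B) := by
    refine hcont.continuousAt.eventually (Units.isOpen.mem_nhds ?_)
    simp
  have hlim : Tendsto (fun ε : ℝ => Ring.inverse (1 - ε • B)) (𝓝 0) (𝓝 1) := by
    have h := (NormedRing.inverse_continuousAt (1 : (E →L[ℝ] E)ˣ)).tendsto.comp
      (hcont.tendsto' 0 1 (by simp))
    rw [Units.val_one, Ring.inverse_one] at h
    exact h
  have happrox : Tendsto (fun ε : ℝ => exp (s • (Ring.inverse (1 - ε • B) * B)) x) (𝓝[>] 0)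
      (𝓝 (exp (s • B) x)) := by
    have h := ((ContinuousLinearMap.apply ℝ E x).continuous.tendsto _).comp
      (Tendsto.exp ((hlim.mul_const B).const_smul s))
    rw [one_mul] at h
    exact h.mono_left nhdsWithin_le_nhds
  refine C.isClosed.mem_of_tendsto happrox ?_
  filter_upwards [hR, nhdsWithin_le_nhds hunit, self_mem_nhdsWithin] with ε hRε hε hεpos
  have hyosida : s • (Ring.inverse (1 - ε • B) * B) =
      (s / ε) • Ring.inverse (1 - ε • B) + algebraMap ℝ _ (-(s / ε)) := by
    have h := Ring.inverse_mul_cancel _ hε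
    rw [mul_sub, mul_one, mul_smul_comm, sub_eq_iff_eq_add'] at h
    conv_rhs => rw [h]
    rw [Algebra.algebraMap_eq_smul_one, smul_add, smul_smul, div_mul_cancel₀ _ hεpos.ne', neg_smul]
    abel
  rw [hyosida, exp_add_of_commute (Algebra.commutes _ _).symm, ← algebraMap_exp_comm,
    mul_apply_eq_comp, ← Real.exp_eq_exp_ℝ]
  refine C.mapsTo_exp (fun y hy => ?_) ?_
  · exact C.smul_mem (hRε hy) (div_nonneg hs (le_of_lt hεpos))
  · simpa using C.smul_mem hx (Real.exp_pos _).le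

section Hilbert

variable {H : Type*} [NormedAddCommGroup H] [InnerProductSpace ℝ H] [CompleteSpace H]

theorem intervalIntegral_mem (C : ProperCone ℝ H) {f : ℝ → H} {a b : ℝ} (hab : a ≤ b)
    (hf : IntervalIntegrable f MeasureTheory.volume a b) (hfC : ∀ s ∈ Set.Icc a b, f s ∈ C) :
    ∫ s in a..b, f s ∈ C := by
  rw [← innerDual_innerDual C, mem_innerDual]
  intro y hy
  rw [← innerSL_apply_apply (𝕜 := ℝ), ← (innerSL ℝ y).intervalIntegral_comp_comm hf]
  exact intervalIntegral.integral_nonneg hab fun s hs => by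
    rw [innerSL_apply_apply, real_inner_comm]
    exact hy (hfC s hs)

end Hilbert

end ProperCone

namespace IsSelfDualCone

variable {H : Type*} [NormedAddCommGroup H] [InnerProductSpace ℝ H] {K : Set H}

theorem mem_iff (hK : IsSelfDualCone K) {x : H} : x ∈ K ↔ ∀ y ∈ K, 0 ≤ ⟪x, y⟫ :=
  Set.ext_iff.1 hK x

variable [CompleteSpace H]

theorem coe_innerDual (hK : IsSelfDualCone K) : (ProperCone.innerDual K : Set H) = K := by
  conv_rhs => rw [hK]
  ext x
  simp [real_inner_comm x]

theorem exists_orthogonal_decomposition (hK : IsSelfDualCone K) (z : H) :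
    ∃ p ∈ K, ∃ n ∈ K, ⟪p, n⟫ = 0 ∧ z = p - n := by
  obtain ⟨C, rfl⟩ : ∃ C : ProperCone ℝ H, (C : Set H) = K := ⟨_, hK.coe_innerDual⟩
  obtain ⟨p, hp, hmin⟩ := exists_norm_eq_iInf_of_complete_convex C.nonempty
    C.isClosed.isComplete C.convex z
  rw [norm_eq_iInf_iff_real_inner_le_zero C.convex hp] at hmin
  have horth : ⟪z - p, p⟫ = 0 := by
    have h2 := hmin ((2 : ℝ) • p) (C.smul_mem hp (by norm_num))
    have h0 := hmin 0 C.zero_mem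
    rw [two_smul, add_sub_cancel_right] at h2
    rw [zero_sub, inner_neg_right] at h0
    linarith
  refine ⟨p, hp, p - z, hK.mem_iff.2 fun w hw => ?_, ?_, by abel⟩
  · have h := hmin w hw
    rw [inner_sub_right, horth, sub_zero] at h
    rw [← neg_sub, inner_neg_left]
    exact neg_nonneg.2 h
  · rw [← neg_sub, inner_neg_right, real_inner_comm, horth, neg_zero]

theorem mem_of_sub_apply_mem (hK : IsSelfDualCone K) {C : H →L[ℝ] H}
    (hC : ∀ v ∈ K, ∀ u ∈ K, ⟪v, u⟫ = 0 → 0 ≤ ⟪C v, u⟫) (hC1 : ‖C‖ < 1) {z : H}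
    (hz : z - C z ∈ K) : z ∈ K := by
  obtain ⟨p, hp, n, hn, hpn, rfl⟩ := hK.exists_orthogonal_decomposition z
  have hCpn : 0 ≤ ⟪C p, n⟫ := hC p hp n hn hpn
  have hCnn : ⟪C n, n⟫ ≤ ‖C‖ * ‖n‖ ^ 2 := by
    calc ⟪C n, n⟫ ≤ ‖C n‖ * ‖n‖ := real_inner_le_norm _ _
      _ ≤ ‖C‖ * ‖n‖ * ‖n‖ := by gcongr; exact C.le_opNorm n
      _ = ‖C‖ * ‖n‖ ^ 2 := by ring
  have hpos : 0 ≤ ⟪p - n - C (p - n), n⟫ := (hK.mem_iff.1 hz) n hn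
  have hn0 : ‖n‖ ^ 2 * (1 - ‖C‖) ≤ 0 := by
    rw [map_sub, inner_sub_left, inner_sub_left, inner_sub_left, hpn,
      real_inner_self_eq_norm_sq] at hpos
    nlinarith
  have : n = 0 := by simpa using nonpos_of_mul_nonpos_left hn0 (sub_pos.2 hC1)
  simpa [this] using hp

theorem mapsTo_inverse_one_sub (hK : IsSelfDualCone K) {C : H →L[ℝ] H}
    (hC : ∀ v ∈ K, ∀ u ∈ K, ⟪v, u⟫ = 0 → 0 ≤ ⟪C v, u⟫) (hC1 : ‖C‖ < 1) :
    Set.MapsTo (Ring.inverse (1 - C) : H →L[ℝ] H) K K := fun y hy => by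
  refine hK.mem_of_sub_apply_mem hC hC1 ?_
  have h : (1 - C) * Ring.inverse (1 - C) = 1 :=
    Ring.mul_inverse_cancel _ (Units.oneSub C hC1).isUnit
  have hy' := congr($h y)
  simp only [mul_apply_eq_comp, sub_apply, one_apply_eq_self] at hy'
  rwa [hy']

theorem mapsTo_exp_smul (hK : IsSelfDualCone K) {B : H →L[ℝ] H}
    (hB : ∀ v ∈ K, ∀ u ∈ K, ⟪v, u⟫ = 0 → 0 ≤ ⟪B v, u⟫) {s : ℝ} (hs : 0 ≤ s) :
    Set.MapsTo (exp (s • B) : H →L[ℝ] H) K K := by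
  obtain ⟨C, rfl⟩ : ∃ C : ProperCone ℝ H, (C : Set H) = K := ⟨_, hK.coe_innerDual⟩
  refine C.mapsTo_exp_smul_of_resolvent ?_ hs
  have hsmall : ∀ᶠ ε in 𝓝 (0 : ℝ), ‖ε • B‖ < 1 :=
    ((continuous_id.smul continuous_const).norm.tendsto' (0 : ℝ) 0 (by simp)).eventually
      (eventually_lt_nhds one_pos)
  filter_upwards [nhdsWithin_le_nhds hsmall, self_mem_nhdsWithin] with ε hε hεpos
  refine hK.mapsTo_inverse_one_sub (fun v hv u hu hvu => ?_) hε
  rw [smul_apply, real_inner_smul_left]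
  exact mul_nonneg (le_of_lt hεpos) (hB v hv u hu hvu)

end IsSelfDualCone

/-- If `B̃` is a bounded linear operator which is quasi-monotone with
respect to the self-dual cone `K` and `b̃ ∈ K`, then the solution
`x_t = e^{tB̃}x + ∫₀ᵗ e^{(t−s)B̃}b̃ ds` of the affine ODE `dx_t = (b̃ + B̃x_t)dt`, `x₀ = x ∈ K`,
stays in `K` for all `t ≥ 0`. -/
theorem stmt_17 {H : Type*} [NormedAddCommGroup H] [InnerProductSpace ℝ H] [CompleteSpace H]
    (K : Set H) (hK : IsSelfDualCone K)
    (Bt : H →L[ℝ] H)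
    (hquasi : ∀ v₁ v₂ : H, v₂ - v₁ ∈ K → ∀ u ∈ K, ⟪v₂ - v₁, u⟫ = 0 →
      0 ≤ ⟪Bt v₂ - Bt v₁, u⟫)
    (bt : H) (hbt : bt ∈ K) (x : H) (hx : x ∈ K) (t : ℝ) (ht : 0 ≤ t) :
    NormedSpace.exp (t • Bt) x + (∫ s in (0 : ℝ)..t, NormedSpace.exp ((t - s) • Bt) bt) ∈ K := by
  have hB : ∀ v ∈ K, ∀ u ∈ K, ⟪v, u⟫ = 0 → 0 ≤ ⟪Bt v, u⟫ := fun v hv u hu hvu => by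
    simpa using hquasi 0 v (by simpa using hv) u hu (by simpa using hvu)
  have hcont : Continuous fun s : ℝ => NormedSpace.exp ((t - s) • Bt) bt :=
    ((differentiable_exp_smul_const ℝ Bt).continuous.comp
      (continuous_const.sub continuous_id)).clm_apply continuous_const
  obtain ⟨C, rfl⟩ : ∃ C : ProperCone ℝ H, (C : Set H) = K := ⟨_, hK.coe_innerDual⟩
  exact C.add_mem (hK.mapsTo_exp_smul hB ht hx) <| C.intervalIntegral_mem ht
    (hcont.intervalIntegrable 0 t) fun s hs => hK.mapsTo_exp_smul hB (sub_nonneg.2 hs.2) hbt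
end
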